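/- arXiv:1405.5371 — 7 statements merged into one kernel-verified Lean document; each statement's English description precedes it below -/
import Mathlib

section
/- (Key exchange lemma behind Theorem 3) Let J = {1,…,n} be a finite set of jobs partially ordered by a strict partial order ≺ (precedence constraints), let K ≥ 1, and for each j ∈ J and i ∈ {1,…,K} let p_j(S_i) ≥ 0, w_j(S_i) ≥ 0, d_j(S_i) ≥ 0 be given. A feasible schedule is a bijection π : {1,…,n} → J such that i ≺ j implies that i occupies an earlier position than j in π. For a feasible schedule π and a job j, let pred(π,j) be the set consisting of j and all jobs preceding j in π, and define the maximum-cost objective cost(π) = max_{j∈J} F_j(pred(π,j)), where F_j(D) = max_{i∈{1,…,K}} [ w_j(S_i)( Σ_{k∈D} p_k(S_i) − d_j(S_i) ) ]^+. Suppose j* ∈ J has no successor (there is no l ∈ J with j* ≺ l) and satisfies F_{j*}(J) ≤ F_i(J) for every job i ∈ J that has no successor. Then there exists a feasible schedule π with j* scheduled in the last position such that cost(π) ≤ cost(σ) for every feasible schedule σ. -/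
/-!
Take a feasible schedule of minimal cost and move `j*` to the last position, keeping the
relative order of the other jobs. Since `j*` has no successor the new schedule is still
feasible, and since `F_j` is monotone in its set argument no job other than `j*` gets more
expensive. The job `i₀` last in the old schedule has no successor, so
`F_{j*}(pred j*) = F_{j*}(J) ≤ F_{i₀}(J)`, which is a term of the old cost. A feasible
schedule exists at all because a job has strictly fewer predecessors than each of its
successors, so sorting by that number respects the precedences.
-/

/-- `Fj hK p w d D j = max_{i∈[K]} [ w_j(S_i) ( Σ_{k∈D} p_k(S_i) − d_j(S_i) ) ]^+`. -/
noncomputable def Fj {n K : ℕ} (hK : 0 < K)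
    (p w d : Fin n → Fin K → ℝ) (D : Finset (Fin n)) (j : Fin n) : ℝ :=
  Finset.univ.sup' ⟨⟨0, hK⟩, Finset.mem_univ _⟩
    (fun i : Fin K => max 0 (w j i * ((∑ k ∈ D, p k i) - d j i)))

/-- The min-max cost of a schedule `π` (where `π r` is the job at position `r`):
`cost(π) = max_{j} F_j(pred(π,j))` with `pred(π,j) = {k : pos(k) ≤ pos(j)}`. -/
noncomputable def schedCost {n K : ℕ} (hn : 0 < n) (hK : 0 < K)
    (p w d : Fin n → Fin K → ℝ) (π : Equiv.Perm (Fin n)) : ℝ :=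
  Finset.univ.sup' ⟨⟨0, hn⟩, Finset.mem_univ _⟩
    (fun j : Fin n =>
      Fj hK p w d (Finset.univ.filter (fun k => π.symm k ≤ π.symm j)) j)

open Finset Function

theorem exists_perm_symm_le_iff_of_injective {α : Type*} [LinearOrder α] {n : ℕ}
    {f : Fin n → α} (hf : Injective f) :
    ∃ π : Equiv.Perm (Fin n), ∀ i j, π.symm i ≤ π.symm j ↔ f i ≤ f j := by
  have hmono : StrictMono (f ∘ Tuple.sort f) :=
    (Tuple.monotone_sort f).strictMono_of_injective (hf.comp (Tuple.sort f).injective)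
  refine ⟨Tuple.sort f, fun i j => ?_⟩
  simpa using (hmono.le_iff_le (a := (Tuple.sort f).symm i) (b := (Tuple.sort f).symm j)).symm

theorem Equiv.Perm.symm_le_symm_apply_last {n : ℕ} (hn : 0 < n) (π : Equiv.Perm (Fin n))
    (k : Fin n) : π.symm k ≤ π.symm (π ⟨n - 1, Nat.sub_lt hn Nat.one_pos⟩) := by
  rw [Equiv.symm_apply_apply, Fin.le_def]
  exact Nat.le_sub_one_of_lt (π.symm k).isLt

theorem Equiv.Perm.apply_last_eq_of_forall_symm_le {n : ℕ} (hn : 0 < n) {π : Equiv.Perm (Fin n)}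
    {j : Fin n} (h : ∀ k, π.symm k ≤ π.symm j) : π ⟨n - 1, Nat.sub_lt hn Nat.one_pos⟩ = j := by
  rw [← Equiv.eq_symm_apply, Fin.ext_iff]
  have := Fin.le_def.1 (h (π ⟨n - 1, Nat.sub_lt hn Nat.one_pos⟩))
  simp only [Equiv.symm_apply_apply, Fin.val_mk] at this ⊢
  omega

section Scheduling

variable {n K : ℕ}

def IsFeasible (prec : Fin n → Fin n → Prop) (π : Equiv.Perm (Fin n)) : Prop :=
  ∀ i j, prec i j → π.symm i < π.symm j

theorem card_prec_lt_card_prec {prec : Fin n → Fin n → Prop} [DecidableRel prec]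
    (hirr : ∀ j, ¬ prec j j) (htrans : ∀ i j k, prec i j → prec j k → prec i k)
    {i j : Fin n} (hij : prec i j) : #{l | prec l i} < #{l | prec l j} := by
  refine card_lt_card ⟨fun l hl => ?_, fun hsub => hirr i ?_⟩
  · simp only [mem_filter, mem_univ, true_and] at hl ⊢
    exact htrans l i j hl hij
  · simpa using hsub (by simpa using hij)

theorem exists_isFeasible {prec : Fin n → Fin n → Prop}
    (hirr : ∀ j, ¬ prec j j) (htrans : ∀ i j k, prec i j → prec j k → prec i k) :
    ∃ σ, IsFeasible prec σ := by
  classical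
  let f : Fin n → ℕ ×ₗ Fin n := fun k => toLex (#{l | prec l k}, k)
  have hf : Injective f := fun a b h => congrArg Prod.snd (toLex.injective h)
  obtain ⟨σ, hσ⟩ := exists_perm_symm_le_iff_of_injective hf
  refine ⟨σ, fun i j hij => (lt_iff_lt_of_le_iff_le (hσ j i)).2 ?_⟩
  exact Prod.Lex.toLex_lt_toLex.2 (Or.inl (card_prec_lt_card_prec hirr htrans hij))

theorem Fj_mono (hK : 0 < K) {p w : Fin n → Fin K → ℝ} (d : Fin n → Fin K → ℝ)
    (hp : ∀ j i, 0 ≤ p j i) (hw : ∀ j i, 0 ≤ w j i)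
    {D D' : Finset (Fin n)} (h : D ⊆ D') (j : Fin n) :
    Fj hK p w d D j ≤ Fj hK p w d D' j := by
  refine sup'_le _ _ fun i _ => le_trans ?_ (le_sup' _ (mem_univ i))
  refine max_le_max le_rfl (mul_le_mul_of_nonneg_left (sub_le_sub_right ?_ _) (hw j i))
  exact sum_le_sum_of_subset_of_nonneg h fun k _ _ => hp k i

theorem schedCost_le_schedCost (hn : 0 < n) (hK : 0 < K) (p w d : Fin n → Fin K → ℝ)
    {π σ : Equiv.Perm (Fin n)}
    (h : ∀ j, ∃ j', Fj hK p w d {k | π.symm k ≤ π.symm j} j ≤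
      Fj hK p w d {k | σ.symm k ≤ σ.symm j'} j') :
    schedCost hn hK p w d π ≤ schedCost hn hK p w d σ := by
  refine sup'_le _ _ fun j _ => ?_
  obtain ⟨j', hj'⟩ := h j
  exact hj'.trans (le_sup' (fun j => Fj hK p w d {k | σ.symm k ≤ σ.symm j} j) (mem_univ j'))

theorem exists_isFeasible_last_schedCost_le (hn : 0 < n) (hK : 0 < K)
    {prec : Fin n → Fin n → Prop} {p w : Fin n → Fin K → ℝ} (d : Fin n → Fin K → ℝ)
    (hp : ∀ j i, 0 ≤ p j i) (hw : ∀ j i, 0 ≤ w j i)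
    {jstar : Fin n} (hns : ∀ l, ¬ prec jstar l)
    (hmin : ∀ i : Fin n, (∀ l, ¬ prec i l) →
      Fj hK p w d univ jstar ≤ Fj hK p w d univ i)
    {σ : Equiv.Perm (Fin n)} (hσ : IsFeasible prec σ) :
    ∃ π, IsFeasible prec π ∧ π ⟨n - 1, Nat.sub_lt hn Nat.one_pos⟩ = jstar ∧
      schedCost hn hK p w d π ≤ schedCost hn hK p w d σ := by
  classical
  let f : Fin n → ℕ := fun k => if k = jstar then n else σ.symm k
  have hf_lt : ∀ k, k ≠ jstar → f k < n := fun k hk => by simp [f, hk]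
  have hf : Injective f := fun a b hab => by
    by_cases ha : a = jstar <;> by_cases hb : b = jstar
    · rw [ha, hb]
    · exact absurd hab (by simpa [f, ha] using (hf_lt b hb).ne')
    · exact absurd hab (by simpa [f, hb] using (hf_lt a ha).ne)
    · simpa [f, ha, hb, Fin.val_inj] using hab
  obtain ⟨π, hπ⟩ := exists_perm_symm_le_iff_of_injective hf
  have hfeas : IsFeasible prec π := fun i j hij => by
    have hi : i ≠ jstar := by rintro rfl; exact hns j hij
    refine (lt_iff_lt_of_le_iff_le (hπ j i)).2 ?_
    by_cases hj : j = jstar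
    · simpa [f, hj] using hf_lt i hi
    · simpa [f, hi, hj] using hσ i j hij
  have hlast : π ⟨n - 1, Nat.sub_lt hn Nat.one_pos⟩ = jstar :=
    Equiv.Perm.apply_last_eq_of_forall_symm_le hn fun k => (hπ k jstar).2 <| by
      by_cases hk : k = jstar
      · rw [hk]
      · simpa [f] using (hf_lt k hk).le
  refine ⟨π, hfeas, hlast, schedCost_le_schedCost hn hK p w d fun j => ?_⟩
  by_cases hj : j = jstar
  · set i₀ := σ ⟨n - 1, Nat.sub_lt hn Nat.one_pos⟩
    have hi₀ : ∀ l, ¬ prec i₀ l := fun l hl =>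
      (hσ i₀ l hl).not_ge (Equiv.Perm.symm_le_symm_apply_last hn σ l)
    refine ⟨i₀, ?_⟩
    calc Fj hK p w d {k | π.symm k ≤ π.symm j} j
        ≤ Fj hK p w d univ jstar := hj ▸ Fj_mono hK d hp hw (subset_univ _) j
      _ ≤ Fj hK p w d univ i₀ := hmin i₀ hi₀
      _ ≤ Fj hK p w d {k | σ.symm k ≤ σ.symm i₀} i₀ :=
          Fj_mono hK d hp hw
            (fun k _ => mem_filter.2 ⟨mem_univ k, Equiv.Perm.symm_le_symm_apply_last hn σ k⟩) i₀
  · refine ⟨j, Fj_mono hK d hp hw (fun k hk => ?_) j⟩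
    have hk : f k ≤ f j := (hπ k j).1 (by simpa using hk)
    have hkj : k ≠ jstar := by
      rintro rfl; simp only [f, if_pos rfl] at hk; exact (hf_lt j hj).not_ge hk
    simpa [f, hj, hkj] using hk

end Scheduling

theorem exchange_lemma_general (n K : ℕ) (hn : 0 < n) (hK : 0 < K)
    (prec : Fin n → Fin n → Prop)
    (hirr : ∀ j, ¬ prec j j)
    (htrans : ∀ i j k, prec i j → prec j k → prec i k)
    (p w d : Fin n → Fin K → ℝ)
    (hp : ∀ j i, 0 ≤ p j i) (hw : ∀ j i, 0 ≤ w j i)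
    (jstar : Fin n) (hns : ∀ l, ¬ prec jstar l)
    (hmin : ∀ i : Fin n, (∀ l, ¬ prec i l) →
      Fj hK p w d Finset.univ jstar ≤ Fj hK p w d Finset.univ i) :
    ∃ π : Equiv.Perm (Fin n),
      (∀ i j, prec i j → π.symm i < π.symm j) ∧
      π ⟨n - 1, Nat.sub_lt hn Nat.one_pos⟩ = jstar ∧
      ∀ σ : Equiv.Perm (Fin n), (∀ i j, prec i j → σ.symm i < σ.symm j) →
        schedCost hn hK p w d π ≤ schedCost hn hK p w d σ := by
  classical
  obtain ⟨σ₁, hσ₁⟩ := exists_isFeasible hirr htrans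
  obtain ⟨σ₀, hσ₀, hσ₀_min⟩ := exists_min_image {σ | IsFeasible prec σ}
    (schedCost hn hK p w d) ⟨σ₁, mem_filter.2 ⟨mem_univ σ₁, hσ₁⟩⟩
  obtain ⟨π, hπ, hlast, hcost⟩ :=
    exists_isFeasible_last_schedCost_le hn hK d hp hw hns hmin (mem_filter.1 hσ₀).2
  exact ⟨π, hπ, hlast, fun σ hσ => hcost.trans (hσ₀_min σ (mem_filter.2 ⟨mem_univ σ, hσ⟩))⟩

/-- key exchange lemma behind Theorem 3: if j* has no successor in the
precedence order and F_{j*}(J) ≤ F_i(J) for every job i without a successor, then there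
is a feasible schedule with j* in the last position whose min-max cost is minimal among
all feasible schedules. -/
theorem exchange_lemma (n K : ℕ) (hn : 0 < n) (hK : 0 < K)
    (prec : Fin n → Fin n → Prop)
    (hirr : ∀ j, ¬ prec j j)
    (htrans : ∀ i j k, prec i j → prec j k → prec i k)
    (p w d : Fin n → Fin K → ℝ)
    (hp : ∀ j i, 0 ≤ p j i) (hw : ∀ j i, 0 ≤ w j i) (hd : ∀ j i, 0 ≤ d j i)
    (jstar : Fin n) (hns : ∀ l, ¬ prec jstar l)
    (hmin : ∀ i : Fin n, (∀ l, ¬ prec i l) →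
      Fj hK p w d Finset.univ jstar ≤ Fj hK p w d Finset.univ i) :
    ∃ π : Equiv.Perm (Fin n),
      (∀ i j, prec i j → π.symm i < π.symm j) ∧
      π ⟨n - 1, Nat.sub_lt hn Nat.one_pos⟩ = jstar ∧
      ∀ σ : Equiv.Perm (Fin n), (∀ i j, prec i j → σ.symm i < σ.symm j) →
        schedCost hn hK p w d π ≤ schedCost hn hK p w d σ :=
  exchange_lemma_general n K hn hK prec hirr htrans p w d hp hw jstar hns hmin
end

section
/- (Theorem 7) Let K ≥ 1 be an integer, let Π be a finite nonempty set, and let f : Π × {1,…,K} → ℝ assign a nonnegative cost f(π,S_i) to each element π ∈ Π and each index i. Let v = (v_1,…,v_K) satisfy v_i ∈ [0,1] for all i, v_1 + … + v_K = 1, v_1 = … = v_{k−1} = 0 and v_k > 0 for some k ∈ {1,…,K}. For π ∈ Π let OWA(π) = owa_v(f(π,S_1),…,f(π,S_K)) and let q_k(π) denote the k-th largest value among f(π,S_1),…,f(π,S_K). If π̂ ∈ Π minimizes q_k(π) over Π, then for every π ∈ Π it holds OWA(π̂) ≤ (1/v_k) · OWA(π). -/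
/-!
The `k`-th largest cost sandwiches the OWA value: since the weights before position `k` vanish
and the sorted costs decrease, `owa v f ≤ kthLargest f k`; since all terms are nonnegative,
`v k * kthLargest f k ≤ owa v f`. Chaining these through the minimality of `π̂` gives the bound.
-/

/-- The permutation sorting a vector `f` in nonincreasing order. -/
noncomputable def sortDesc {K : ℕ} (f : Fin K → ℝ) : Equiv.Perm (Fin K) :=
  Tuple.sort (fun j => -f j)

/-- The Ordered Weighted Averaging operator:
`owa v f = Σ_i v_i f_{σ(i)}` where `σ` sorts `f` in nonincreasing order. -/
noncomputable def owa {K : ℕ} (v f : Fin K → ℝ) : ℝ :=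
  ∑ i : Fin K, v i * f (sortDesc f i)

/-- `kthLargest f k` is the entry of `f` at position `k` (0-based) after sorting
in nonincreasing order. -/
noncomputable def kthLargest {K : ℕ} (f : Fin K → ℝ) (k : Fin K) : ℝ :=
  f (sortDesc f k)

theorem sortDesc_antitone {K : ℕ} (f : Fin K → ℝ) : Antitone (f ∘ sortDesc f) := by
  intro i j hij
  simpa [sortDesc] using Tuple.monotone_sort (fun j => -f j) hij

theorem owa_le_kthLargest {K : ℕ} {v : Fin K → ℝ} (f : Fin K → ℝ) (hv : 0 ≤ v)
    (hsum : ∑ i, v i = 1) {k : Fin K} (hzero : ∀ i, i < k → v i = 0) :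
    owa v f ≤ kthLargest f k :=
  calc owa v f ≤ ∑ i, v i * kthLargest f k := by
        refine Finset.sum_le_sum fun i _ => ?_
        rcases lt_or_ge i k with hik | hki
        · simp [hzero i hik]
        · exact mul_le_mul_of_nonneg_left (sortDesc_antitone f hki) (hv i)
    _ = kthLargest f k := by rw [← Finset.sum_mul, hsum, one_mul]

theorem mul_kthLargest_le_owa {K : ℕ} {v f : Fin K → ℝ} (hv : 0 ≤ v) (hf : 0 ≤ f) (k : Fin K) :
    v k * kthLargest f k ≤ owa v f :=
  Finset.single_le_sum (fun i _ => mul_nonneg (hv i) (hf _)) (Finset.mem_univ k)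

theorem kth_largest_minimizer_approx_general (K : ℕ)
    (Sch : Type*)
    (f : Sch → Fin K → ℝ) (hf : ∀ π i, 0 ≤ f π i)
    (v : Fin K → ℝ) (hv : ∀ i, v i ∈ Set.Icc (0 : ℝ) 1)
    (hsum : ∑ i : Fin K, v i = 1)
    (k : Fin K) (hzero : ∀ i : Fin K, i < k → v i = 0) (hpos : 0 < v k)
    (πhat : Sch) (hmin : ∀ π : Sch, kthLargest (f πhat) k ≤ kthLargest (f π) k)
    (π : Sch) :
    owa v (f πhat) ≤ (1 / v k) * owa v (f π) := by
  have hv_nonneg : 0 ≤ v := fun i => (hv i).1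
  have hupper : kthLargest (f π) k ≤ (1 / v k) * owa v (f π) := by
    rw [one_div_mul_eq_div, le_div_iff₀ hpos, mul_comm]
    exact mul_kthLargest_le_owa hv_nonneg (hf π) k
  calc owa v (f πhat) ≤ kthLargest (f πhat) k := owa_le_kthLargest _ hv_nonneg hsum hzero
    _ ≤ kthLargest (f π) k := hmin π
    _ ≤ (1 / v k) * owa v (f π) := hupper

/-- Theorem 7: if the OWA weights satisfy v_1 = … = v_{k−1} = 0 and
v_k > 0, and π̂ minimizes the k-th largest cost over the finite nonempty set Π, then
OWA(π̂) ≤ (1/v_k) · OWA(π) for every π ∈ Π.  (Indices are 0-based: `k : Fin K`.) -/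
theorem kth_largest_minimizer_approx (K : ℕ) (hK : 0 < K)
    (Sch : Type*) [Fintype Sch] [Nonempty Sch]
    (f : Sch → Fin K → ℝ) (hf : ∀ π i, 0 ≤ f π i)
    (v : Fin K → ℝ) (hv : ∀ i, v i ∈ Set.Icc (0 : ℝ) 1)
    (hsum : ∑ i : Fin K, v i = 1)
    (k : Fin K) (hzero : ∀ i : Fin K, i < k → v i = 0) (hpos : 0 < v k)
    (πhat : Sch) (hmin : ∀ π : Sch, kthLargest (f πhat) k ≤ kthLargest (f π) k)
    (π : Sch) :
    owa v (f πhat) ≤ (1 / v k) * owa v (f π) :=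
  kth_largest_minimizer_approx_general K Sch f hf v hv hsum k hzero hpos πhat hmin π
end

section
/- (Corollary to Theorem 7) Let K ≥ 1 be an integer, let Π be a finite nonempty set, and let f : Π × {1,…,K} → ℝ assign a nonnegative cost f(π,S_i) to each π ∈ Π and each i. Let v = (v_1,…,v_K) satisfy v_i ∈ [0,1] for all i, v_1 + … + v_K = 1, and be nonincreasing: v_1 ≥ v_2 ≥ … ≥ v_K. For π ∈ Π let OWA(π) = owa_v(f(π,S_1),…,f(π,S_K)). If π̂ ∈ Π minimizes max_{i∈{1,…,K}} f(π,S_i) over Π, then for every π ∈ Π it holds OWA(π̂) ≤ (1/v_1) · OWA(π) ≤ K · OWA(π). (In particular v_1 ≥ 1/K > 0.) -/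
/-!
With nonnegative weights summing to one, `owa v g` is a convex combination of the entries of
`g`, hence at most `max g`; and since the first weight multiplies the largest entry, it is at
least `v₁ · max g`. Thus `OWA(π̂) ≤ max f(π̂) ≤ max f(π) ≤ OWA(π) / v₁`. Finally `v₁ ≥ 1/K`,
as `v₁` is the largest of `K` weights summing to one.
-/

open Finset

theorem antitone_comp_sortDesc {K : ℕ} (g : Fin K → ℝ) : Antitone (g ∘ sortDesc g) := by
  intro i j hij
  simpa [sortDesc] using Tuple.monotone_sort (fun j => -g j) hij

theorem sup'_eq_apply_sortDesc_zero {K : ℕ} (hK : 0 < K) (hne : (univ : Finset (Fin K)).Nonempty)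
    (g : Fin K → ℝ) : univ.sup' hne g = g (sortDesc g ⟨0, hK⟩) := by
  refine le_antisymm (sup'_le hne g fun i _ => ?_) (le_sup' g (mem_univ _))
  simpa using antitone_comp_sortDesc g (Fin.mk_le_of_le_val (Nat.zero_le ((sortDesc g).symm i)))

theorem owa_le_sup' {K : ℕ} (hne : (univ : Finset (Fin K)).Nonempty) {v : Fin K → ℝ}
    (hv : ∀ i, 0 ≤ v i) (hsum : ∑ i, v i = 1) (g : Fin K → ℝ) :
    owa v g ≤ univ.sup' hne g :=
  calc owa v g ≤ ∑ i, v i * univ.sup' hne g :=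
        sum_le_sum fun i _ => mul_le_mul_of_nonneg_left (le_sup' g (mem_univ _)) (hv i)
    _ = univ.sup' hne g := by rw [← sum_mul, hsum, one_mul]

theorem mul_sup'_le_owa {K : ℕ} (hK : 0 < K) (hne : (univ : Finset (Fin K)).Nonempty)
    {v g : Fin K → ℝ} (hv : ∀ i, 0 ≤ v i) (hg : ∀ i, 0 ≤ g i) :
    v ⟨0, hK⟩ * univ.sup' hne g ≤ owa v g := by
  rw [sup'_eq_apply_sortDesc_zero hK]
  exact single_le_sum (f := fun i => v i * g (sortDesc g i))
    (fun i _ => mul_nonneg (hv i) (hg _)) (mem_univ _)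

theorem owa_nonneg {K : ℕ} {v g : Fin K → ℝ} (hv : ∀ i, 0 ≤ v i) (hg : ∀ i, 0 ≤ g i) :
    0 ≤ owa v g :=
  sum_nonneg fun i _ => mul_nonneg (hv i) (hg _)

theorem inv_card_le_apply_zero_of_antitone {K : ℕ} (hK : 0 < K) {v : Fin K → ℝ}
    (hsum : ∑ i, v i = 1) (hmono : Antitone v) : (1 : ℝ) / K ≤ v ⟨0, hK⟩ := by
  have hsum_le : ∑ i, v i ≤ K * v ⟨0, hK⟩ := by
    simpa using sum_le_card_nsmul univ v (v ⟨0, hK⟩)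
      fun i _ => hmono (Fin.mk_le_of_le_val (Nat.zero_le i))
  rw [div_le_iff₀' (by exact_mod_cast hK)]
  linarith

theorem minmax_minimizer_approx_general (K : ℕ) (hK : 0 < K)
    (hne : (Finset.univ : Finset (Fin K)).Nonempty)
    (Sch : Type*)
    (f : Sch → Fin K → ℝ) (hf : ∀ π i, 0 ≤ f π i)
    (v : Fin K → ℝ) (hv : ∀ i, v i ∈ Set.Icc (0 : ℝ) 1)
    (hsum : ∑ i : Fin K, v i = 1)
    (hmono : ∀ i j : Fin K, i ≤ j → v j ≤ v i)
    (πhat : Sch)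
    (hmin : ∀ π : Sch, Finset.univ.sup' hne (f πhat) ≤ Finset.univ.sup' hne (f π))
    (π : Sch) :
    owa v (f πhat) ≤ (1 / v ⟨0, hK⟩) * owa v (f π) ∧
    (1 / v ⟨0, hK⟩) * owa v (f π) ≤ (K : ℝ) * owa v (f π) ∧
    (1 : ℝ) / K ≤ v ⟨0, hK⟩ ∧ (0 : ℝ) < 1 / K := by
  have hv0 : ∀ i, 0 ≤ v i := fun i => (hv i).1
  have hinv_card_pos : (0 : ℝ) < 1 / K := by positivity
  have hv_first : (1 : ℝ) / K ≤ v ⟨0, hK⟩ := inv_card_le_apply_zero_of_antitone hK hsum hmono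
  have hv_first_pos : 0 < v ⟨0, hK⟩ := hinv_card_pos.trans_le hv_first
  refine ⟨?_, ?_, hv_first, hinv_card_pos⟩
  · calc owa v (f πhat) ≤ univ.sup' hne (f πhat) := owa_le_sup' hne hv0 hsum _
      _ ≤ univ.sup' hne (f π) := hmin π
      _ ≤ 1 / v ⟨0, hK⟩ * owa v (f π) := by
        rw [one_div_mul_eq_div, le_div_iff₀' hv_first_pos]
        exact mul_sup'_le_owa hK hne hv0 (hf π)
  · refine mul_le_mul_of_nonneg_right ?_ (owa_nonneg hv0 (hf π))
    exact (one_div_le hv_first_pos (by positivity)).2 hv_first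

/-- Corollary to Theorem 7: if the OWA weights are nonincreasing and π̂
minimizes the maximum cost, then OWA(π̂) ≤ (1/v_1)·OWA(π) ≤ K·OWA(π) for every π; in
particular v_1 ≥ 1/K > 0. -/
theorem minmax_minimizer_approx (K : ℕ) (hK : 0 < K)
    (hne : (Finset.univ : Finset (Fin K)).Nonempty)
    (Sch : Type*) [Fintype Sch] [Nonempty Sch]
    (f : Sch → Fin K → ℝ) (hf : ∀ π i, 0 ≤ f π i)
    (v : Fin K → ℝ) (hv : ∀ i, v i ∈ Set.Icc (0 : ℝ) 1)
    (hsum : ∑ i : Fin K, v i = 1)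
    (hmono : ∀ i j : Fin K, i ≤ j → v j ≤ v i)
    (πhat : Sch)
    (hmin : ∀ π : Sch, Finset.univ.sup' hne (f πhat) ≤ Finset.univ.sup' hne (f π))
    (π : Sch) :
    owa v (f πhat) ≤ (1 / v ⟨0, hK⟩) * owa v (f π) ∧
    (1 / v ⟨0, hK⟩) * owa v (f π) ≤ (K : ℝ) * owa v (f π) ∧
    (1 : ℝ) / K ≤ v ⟨0, hK⟩ ∧ (0 : ℝ) < 1 / K :=
  minmax_minimizer_approx_general K hK hne Sch f hf v hv hsum hmono πhat hmin π
end

section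
/- (Rounding bound from inequality (8)) Let n ≥ 1, let p_1,…,p_n be nonnegative real numbers, and let C_1,…,C_n be nonnegative real numbers with C_1 ≤ C_2 ≤ … ≤ C_n. Suppose that for every j ∈ {1,…,n} it holds Σ_{i=1}^j p_i C_i ≥ (1/2) (Σ_{i=1}^j p_i)^2. Then for every j ∈ {1,…,n} it holds Σ_{i=1}^j p_i ≤ 2 C_j. -/
/-! Monotonicity of `C` bounds the prefix sum `∑_{i ≤ j} p i * C i` by `S * C j`, where
`S = ∑_{i ≤ j} p i`, so the hypothesis gives `S ^ 2 / 2 ≤ S * C j`; dividing by `S` when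
`S > 0` yields `S ≤ 2 * C j`. -/

lemma le_two_mul_of_half_sq_le_mul {S c : ℝ} (hc : 0 ≤ c) (h : 1 / 2 * S ^ 2 ≤ S * c) :
    S ≤ 2 * c := by
  rcases le_or_gt S 0 with hS | hS
  · linarith
  · nlinarith

lemma Finset.sum_le_two_mul_of_half_sq_le_sum_mul {ι : Type*} {s : Finset ι} {p C : ι → ℝ}
    {c : ℝ} (hp : ∀ i ∈ s, 0 ≤ p i) (hC : ∀ i ∈ s, C i ≤ c) (hc : 0 ≤ c)
    (h : 1 / 2 * (∑ i ∈ s, p i) ^ 2 ≤ ∑ i ∈ s, p i * C i) :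
    ∑ i ∈ s, p i ≤ 2 * c := by
  have hweighted : ∑ i ∈ s, p i * C i ≤ (∑ i ∈ s, p i) * c := by
    rw [Finset.sum_mul]
    exact Finset.sum_le_sum fun i hi => mul_le_mul_of_nonneg_left (hC i hi) (hp i hi)
  exact le_two_mul_of_half_sq_le_mul hc (h.trans hweighted)

theorem rounding_bound_general (n : ℕ) (p C : Fin n → ℝ)
    (hp : ∀ i, 0 ≤ p i) (hC : ∀ i, 0 ≤ C i) (hmono : Monotone C)
    (h : ∀ j : Fin n,
      (1 / 2) * (∑ i ∈ Finset.Iic j, p i) ^ 2 ≤ ∑ i ∈ Finset.Iic j, p i * C i) :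
    ∀ j : Fin n, ∑ i ∈ Finset.Iic j, p i ≤ 2 * C j := fun j =>
  Finset.sum_le_two_mul_of_half_sq_le_sum_mul (fun i _ => hp i)
    (fun _ hi => hmono (Finset.mem_Iic.mp hi)) (hC j) (h j)

/-- rounding bound from inequality (8): if p_i ≥ 0, the C_i are
nonnegative and nondecreasing, and Σ_{i≤j} p_i C_i ≥ (1/2)(Σ_{i≤j} p_i)² for every j,
then Σ_{i≤j} p_i ≤ 2 C_j for every j. -/
theorem rounding_bound (n : ℕ) (hn : 0 < n) (p C : Fin n → ℝ)
    (hp : ∀ i, 0 ≤ p i) (hC : ∀ i, 0 ≤ C i) (hmono : Monotone C)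
    (h : ∀ j : Fin n,
      (1 / 2) * (∑ i ∈ Finset.Iic j, p i) ^ 2 ≤ ∑ i ∈ Finset.Iic j, p i * C i) :
    ∀ j : Fin n, ∑ i ∈ Finset.Iic j, p i ≤ 2 * C j :=
  rounding_bound_general n p C hp hC hmono h
end

section
/- (Correctness of the enumeration in Theorem 6) Let K ≥ 1 be an integer, k ∈ {1,…,K}, let Π be a finite nonempty set, and let f : Π × {1,…,K} → ℝ. For π ∈ Π let q_k(π) denote the k-th largest value among f(π,S_1),…,f(π,S_K). Then min_{π∈Π} q_k(π) = min over all subsets C ⊆ {1,…,K} with |C| = k − 1 of ( min_{π∈Π} max_{i∈{1,…,K}\C} f(π,S_i) ). -/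
/-!
Sorting `g` decreasingly as `g (σ 0) ≥ g (σ 1) ≥ …`, the k-th largest value `g (σ (k-1))` is a
min-max: removing the k-1 indices `σ 0, …, σ (k-2)` leaves it as the largest remaining value, while
any k-1 removed indices miss one of the k indices `σ 0, …, σ (k-1)`, whose value is at least it.
Substituting this for the k-th largest value of every `f π`, the theorem is the interchange of two
minima over finite index sets.
-/

/-- `kthLargestN f k h` is the k-th largest entry of `f` (k is 1-based). -/
noncomputable def kthLargestN {K : ℕ} (f : Fin K → ℝ) (k : ℕ) (h : k - 1 < K) : ℝ :=
  f (Tuple.sort (fun j => -f j) ⟨k - 1, h⟩)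

theorem Set.finite_setOf_exists_and_eq {α γ : Type*} [Finite α] (p : α → Prop) (F : α → γ) :
    {x | ∃ a, p a ∧ x = F a}.Finite :=
  (Set.finite_range F).subset fun _ ⟨a, _, hx⟩ => ⟨a, hx.symm⟩

theorem Set.finite_setOf_exists_eq {α γ : Type*} [Finite α] (F : α → γ) :
    {x | ∃ a, x = F a}.Finite :=
  (Set.finite_range F).subset fun _ ⟨a, hx⟩ => ⟨a, hx.symm⟩

theorem csInf_setOf_exists_csInf_comm {α β γ : Type*} [ConditionallyCompleteLattice γ]
    [Finite α] [Nonempty α] [Finite β] {p : β → Prop} (hp : ∃ b, p b) (F : α → β → γ) :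
    sInf {x | ∃ a, x = sInf {y | ∃ b, p b ∧ y = F a b}}
      = sInf {x | ∃ b, p b ∧ x = sInf {y | ∃ a, y = F a b}} := by
  obtain ⟨b₀, hb₀⟩ := hp
  let a₀ : α := Classical.arbitrary α
  apply le_antisymm
  · refine le_csInf ⟨_, b₀, hb₀, rfl⟩ ?_
    rintro _ ⟨b, hb, rfl⟩
    refine le_csInf ⟨_, a₀, rfl⟩ ?_
    rintro _ ⟨a, rfl⟩
    calc sInf {x | ∃ a, x = sInf {y | ∃ b, p b ∧ y = F a b}}
        ≤ sInf {y | ∃ b, p b ∧ y = F a b} :=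
          csInf_le (Set.finite_setOf_exists_eq _).bddBelow ⟨a, rfl⟩
      _ ≤ F a b := csInf_le (Set.finite_setOf_exists_and_eq p _).bddBelow ⟨b, hb, rfl⟩
  · refine le_csInf ⟨_, a₀, rfl⟩ ?_
    rintro _ ⟨a, rfl⟩
    refine le_csInf ⟨_, b₀, hb₀, rfl⟩ ?_
    rintro _ ⟨b, hb, rfl⟩
    calc sInf {x | ∃ b, p b ∧ x = sInf {y | ∃ a, y = F a b}}
        ≤ sInf {y | ∃ a, y = F a b} :=
          csInf_le (Set.finite_setOf_exists_and_eq p _).bddBelow ⟨b, hb, rfl⟩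
      _ ≤ F a b := csInf_le (Set.finite_setOf_exists_eq _).bddBelow ⟨a, rfl⟩

section KthLargest

variable {K : ℕ} (g : Fin K → ℝ)

theorem antitone_comp_sort_neg : Antitone (g ∘ Tuple.sort (fun j => -g j)) :=
  fun _ _ hij => neg_le_neg_iff.mp (Tuple.monotone_sort (fun j => -g j) hij)

variable {k : ℕ} (h : k - 1 < K)

theorem exists_notMem_kthLargestN_le {C : Finset (Fin K)} (hC : C.card = k - 1) :
    ∃ i ∉ C, kthLargestN g k h ≤ g i := by
  let σ := Tuple.sort (fun j => -g j)
  have hcard : C.card < ((Finset.Iic ⟨k - 1, h⟩).image σ).card := by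
    rw [Finset.card_image_of_injective _ σ.injective, Fin.card_Iic, hC]
    exact Nat.lt_succ_self _
  obtain ⟨_, hmem, hi⟩ := Finset.exists_mem_notMem_of_card_lt_card hcard
  obtain ⟨j, hj, rfl⟩ := Finset.mem_image.mp hmem
  exact ⟨σ j, hi, antitone_comp_sort_neg g (Finset.mem_Iic.mp hj)⟩

theorem exists_card_isGreatest_kthLargestN :
    ∃ C : Finset (Fin K), C.card = k - 1 ∧
      IsGreatest {z | ∃ i, i ∉ C ∧ z = g i} (kthLargestN g k h) := by
  let σ := Tuple.sort (fun j => -g j)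
  refine ⟨(Finset.Iio ⟨k - 1, h⟩).image σ, ?_, ⟨σ ⟨k - 1, h⟩, ?_, rfl⟩, ?_⟩
  · rw [Finset.card_image_of_injective _ σ.injective, Fin.card_Iio]
  · simp [σ.injective.eq_iff]
  · rintro _ ⟨i, hi, rfl⟩
    obtain ⟨j, rfl⟩ := σ.surjective i
    have hj : ¬ j < ⟨k - 1, h⟩ := fun hlt => hi (Finset.mem_image_of_mem σ (Finset.mem_Iio.mpr hlt))
    exact antitone_comp_sort_neg g (not_lt.mp hj)

theorem isLeast_kthLargestN :
    IsLeast {x | ∃ C : Finset (Fin K), C.card = k - 1 ∧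
      x = sSup {z | ∃ i, i ∉ C ∧ z = g i}} (kthLargestN g k h) := by
  refine ⟨?_, ?_⟩
  · obtain ⟨C, hC, hgreatest⟩ := exists_card_isGreatest_kthLargestN g h
    exact ⟨C, hC, hgreatest.csSup_eq.symm⟩
  · rintro _ ⟨C, hC, rfl⟩
    obtain ⟨i, hi, hle⟩ := exists_notMem_kthLargestN_le g h hC
    exact hle.trans (le_csSup (Set.finite_setOf_exists_and_eq (· ∉ C) g).bddAbove ⟨i, hi, rfl⟩)

end KthLargest

theorem quantile_enumeration_general (K : ℕ)
    (k : ℕ) (hk1 : 1 ≤ k) (hkK : k ≤ K)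
    (Sch : Type*) [Fintype Sch] [Nonempty Sch]
    (f : Sch → Fin K → ℝ) :
    sInf {x : ℝ | ∃ π : Sch,
        x = kthLargestN (f π) k (lt_of_lt_of_le (Nat.sub_lt hk1 Nat.one_pos) hkK)}
      = sInf {x : ℝ | ∃ C : Finset (Fin K), C.card = k - 1 ∧
          x = sInf {y : ℝ | ∃ π : Sch,
            y = sSup {z : ℝ | ∃ i : Fin K, i ∉ C ∧ z = f π i}}} := by
  have hk : k - 1 < K := lt_of_lt_of_le (Nat.sub_lt hk1 Nat.one_pos) hkK
  obtain ⟨C, hC, -⟩ := exists_card_isGreatest_kthLargestN (f (Classical.arbitrary Sch)) hk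
  simp only [fun π => (isLeast_kthLargestN (f π) hk).csInf_eq.symm]
  exact csInf_setOf_exists_csInf_comm ⟨C, hC⟩ _

/-- correctness of the enumeration in Theorem 6: the minimum over all
π of the k-th largest cost equals the minimum, over all subsets C of scenarios of
cardinality k−1, of the min-max cost over the remaining scenarios. -/
theorem quantile_enumeration (K : ℕ) (hK : 0 < K)
    (k : ℕ) (hk1 : 1 ≤ k) (hkK : k ≤ K)
    (Sch : Type*) [Fintype Sch] [Nonempty Sch]
    (f : Sch → Fin K → ℝ) :
    sInf {x : ℝ | ∃ π : Sch,
        x = kthLargestN (f π) k (lt_of_lt_of_le (Nat.sub_lt hk1 Nat.one_pos) hkK)}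
      = sInf {x : ℝ | ∃ C : Finset (Fin K), C.card = k - 1 ∧
          x = sInf {y : ℝ | ∃ π : Sch,
            y = sSup {z : ℝ | ∃ i : Fin K, i ∉ C ∧ z = f π i}}} :=
  quantile_enumeration_general K k hk1 hkK Sch f
end

section
/- (Reduction correctness in Theorem 1(i)) Let φ be a Boolean formula with variables x_1,…,x_n and clauses C_1,…,C_m, each clause being a disjunction of at most 3 literals over pairwise distinct variables, and let L be an integer with 0 ≤ L < m. Construct 2n unit-time jobs J_{x_1}, J_{x̄_1}, …, J_{x_n}, J_{x̄_n}; a schedule π is a permutation of these 2n jobs, and the completion time of a job is its position in π (an integer from 1 to 2n). For each k ∈ {1,…,m} define due dates under scenario S_k as follows: for each i ∈ {1,…,n}, if the literal x_i occurs in C_k then d(J_{x_i},S_k) = 2i−1 and d(J_{x̄_i},S_k) = 2i; if the literal x̄_i occurs in C_k then d(J_{x_i},S_k) = 2i and d(J_{x̄_i},S_k) = 2i−1; otherwise d(J_{x_i},S_k) = d(J_{x̄_i},S_k) = 2i. Let f(π,S_k) = max over the 2n jobs j of [pos_π(j) − d(j,S_k)]^+ (the maximum tardiness under S_k). Then there exists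 a truth assignment to x_1,…,x_n satisfying at most L of the clauses if and only if there exists a schedule π with Σ_{k=1}^m f(π,S_k) ≤ L. -/
/-!
Call a schedule *paired* if the two jobs of variable `x_i` occupy the slots `2i - 1, 2i`; the job
in slot `2i` then encodes a truth value for `x_i`. Under a paired schedule the maximum tardiness
under `S_k` is `1` if that assignment satisfies `C_k` and `0` otherwise, so the total tardiness
is the number of satisfied clauses. Conversely, a schedule that is not paired finishes some job
later than `2i` for its variable, which makes every scenario tardy and costs at least `m > L`.
-/

open Finset

theorem Equiv.comp_eq_of_le_of_comp_eq {α β M : Type*} [Fintype α] [Fintype β]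
    [AddCommMonoid M] [PartialOrder M] [IsOrderedCancelAddMonoid M] (π σ : α ≃ β)
    {f : β → M} {g : α → M} (hσ : f ∘ σ = g) (hπ : f ∘ π ≤ g) : f ∘ π = g := by
  have hsum : ∑ j, f (π j) = ∑ j, g j := by
    rw [Equiv.sum_comp π f, ← Equiv.sum_comp σ f, ← hσ]
    rfl
  funext j
  exact (sum_eq_sum_iff_of_le fun j _ => hπ j).mp hsum j (mem_univ j)

namespace Min3Sat

variable {n m : ℕ}

def dueDate (cl : Fin m → Fin n → Option Bool) (k : Fin m) (j : Fin n × Bool) : ℕ :=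
  if cl k j.1 = some j.2 then 2 * (j.1 : ℕ) + 1 else 2 * (j.1 : ℕ) + 2

def maxTardiness (cl : Fin m → Fin n → Option Bool) (π : (Fin n × Bool) ≃ Fin (2 * n))
    (k : Fin m) : ℕ :=
  univ.sup fun j => ((π j : ℕ) + 1) - dueDate cl k j

def Satisfies (cl : Fin m → Fin n → Option Bool) (a : Fin n → Bool) (k : Fin m) : Prop :=
  ∃ i b, cl k i = some b ∧ a i = b

instance (cl : Fin m → Fin n → Option Bool) (a : Fin n → Bool) :
    DecidablePred (Satisfies cl a) :=
  fun k => inferInstanceAs (Decidable (∃ i b, cl k i = some b ∧ a i = b))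

def IsPaired (π : (Fin n × Bool) ≃ Fin (2 * n)) : Prop :=
  ∀ j, (π j : ℕ) / 2 = j.1

def assignmentOf (π : (Fin n × Bool) ≃ Fin (2 * n)) (i : Fin n) : Bool :=
  (π (i, true) : ℕ) % 2 = 1

theorem IsPaired.mod_two_eq_one_iff {π : (Fin n × Bool) ≃ Fin (2 * n)} (hπ : IsPaired π)
    (i : Fin n) (b : Bool) : (π (i, b) : ℕ) % 2 = 1 ↔ assignmentOf π i = b := by
  cases b
  · have hne : (π (i, false) : ℕ) ≠ π (i, true) := fun h => by
      simpa using π.injective (Fin.ext h)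
    have hf : (π (i, false) : ℕ) / 2 = i := hπ (i, false)
    have ht : (π (i, true) : ℕ) / 2 = i := hπ (i, true)
    simp only [assignmentOf, decide_eq_false_iff_not]
    omega
  · simp [assignmentOf]

theorem IsPaired.maxTardiness_eq {π : (Fin n × Bool) ≃ Fin (2 * n)} (hπ : IsPaired π)
    (cl : Fin m → Fin n → Option Bool) (k : Fin m) :
    maxTardiness cl π k = if Satisfies cl (assignmentOf π) k then 1 else 0 := by
  have hterm : ∀ j : Fin n × Bool, (π j : ℕ) + 1 - dueDate cl k j =
      if cl k j.1 = some j.2 ∧ assignmentOf π j.1 = j.2 then 1 else 0 := by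
    rintro ⟨i, b⟩
    have hdiv := hπ (i, b)
    have hmod := hπ.mod_two_eq_one_iff i b
    unfold dueDate
    split_ifs <;> simp_all <;> omega
  simp only [maxTardiness, hterm]
  split_ifs with hsat
  · obtain ⟨i, b, hcl, ha⟩ := hsat
    refine le_antisymm (Finset.sup_le fun j _ => by split_ifs <;> simp) ?_
    exact le_trans (by simp [hcl, ha]) (le_sup (mem_univ (i, b)))
  · refine le_antisymm (Finset.sup_le fun j _ => ?_) (Nat.zero_le _)
    rw [if_neg fun h => hsat ⟨j.1, j.2, h⟩]

theorem IsPaired.sum_maxTardiness {π : (Fin n × Bool) ≃ Fin (2 * n)} (hπ : IsPaired π)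
    (cl : Fin m → Fin n → Option Bool) :
    ∑ k, maxTardiness cl π k = #(univ.filter (Satisfies cl (assignmentOf π))) := by
  simp only [hπ.maxTardiness_eq, sum_boole, Nat.cast_id]

def slot (a : Fin n → Bool) (j : Fin n × Bool) : ℕ :=
  2 * (j.1 : ℕ) + if j.2 = a j.1 then 1 else 0

theorem slot_div_two (a : Fin n → Bool) (j : Fin n × Bool) : slot a j / 2 = j.1 := by
  unfold slot; split <;> omega

theorem slot_mod_two_eq_one_iff (a : Fin n → Bool) (j : Fin n × Bool) :
    slot a j % 2 = 1 ↔ j.2 = a j.1 := by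
  unfold slot; split <;> simp_all

theorem slot_injective (a : Fin n → Bool) : Function.Injective (slot a) := by
  rintro ⟨i, b⟩ ⟨i', b'⟩ h
  have hi : i = i' := Fin.ext (by rw [← slot_div_two a (i, b), h, slot_div_two])
  subst hi
  have hb := slot_mod_two_eq_one_iff a (i, b)
  rw [h, slot_mod_two_eq_one_iff] at hb
  cases b <;> cases b' <;> cases a i <;> simp_all

noncomputable def scheduleOf (a : Fin n → Bool) : (Fin n × Bool) ≃ Fin (2 * n) :=
  Equiv.ofBijective (fun j => ⟨slot a j, by have := slot_div_two a j; omega⟩)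
    ((Fintype.bijective_iff_injective_and_card _).mpr
      ⟨fun j j' h => slot_injective a (Fin.ext_iff.mp h), by simp [mul_comm]⟩)

theorem isPaired_scheduleOf (a : Fin n → Bool) : IsPaired (scheduleOf a) :=
  slot_div_two a

theorem assignmentOf_scheduleOf (a : Fin n → Bool) : assignmentOf (scheduleOf a) = a := by
  funext i
  have := slot_mod_two_eq_one_iff a (i, true)
  cases h : a i <;> simp_all [assignmentOf, scheduleOf]

theorem one_le_maxTardiness_of_late (cl : Fin m → Fin n → Option Bool)
    {π : (Fin n × Bool) ≃ Fin (2 * n)} {j : Fin n × Bool} (hj : (j.1 : ℕ) < (π j : ℕ) / 2)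
    (k : Fin m) : 1 ≤ maxTardiness cl π k := by
  refine le_trans ?_ (le_sup (f := fun j => ((π j : ℕ) + 1) - dueDate cl k j) (mem_univ j))
  unfold dueDate
  split <;> omega

theorem isPaired_of_sum_maxTardiness_lt (cl : Fin m → Fin n → Option Bool)
    {π : (Fin n × Bool) ≃ Fin (2 * n)} (h : ∑ k, maxTardiness cl π k < m) : IsPaired π := by
  have hearly : (fun q : Fin (2 * n) => (q : ℕ) / 2) ∘ π ≤ fun j => (j.1 : ℕ) := by
    intro j
    by_contra! hj
    have hm : ∑ _k : Fin m, 1 ≤ ∑ k, maxTardiness cl π k :=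
      sum_le_sum fun k _ => one_le_maxTardiness_of_late cl hj k
    rw [sum_const, card_univ, Fintype.card_fin, smul_eq_mul, mul_one] at hm
    omega
  -- `q ↦ q / 2` has the same total along every schedule, so the inequality is an equality
  refine congrFun (Equiv.comp_eq_of_le_of_comp_eq π (scheduleOf fun _ => true) ?_ hearly)
  exact funext (isPaired_scheduleOf _)

end Min3Sat

open Min3Sat in
theorem min3sat_reduction_general (n m : ℕ)
    (cl : Fin m → Fin n → Option Bool)
    (L : ℕ) (hL : L < m) :
    (∃ a : Fin n → Bool,
        (Finset.univ.filter
          (fun k : Fin m => ∃ i : Fin n, ∃ b : Bool, cl k i = some b ∧ a i = b)).card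
          ≤ L)
      ↔
    (∃ π : (Fin n × Bool) ≃ Fin (2 * n),
        (∑ k : Fin m,
          Finset.univ.sup (fun j : Fin n × Bool =>
            ((π j : ℕ) + 1) -
              (if cl k j.1 = some j.2 then 2 * (j.1 : ℕ) + 1 else 2 * (j.1 : ℕ) + 2)))
          ≤ L) := by
  change (∃ a, #(univ.filter (Satisfies cl a)) ≤ L) ↔ ∃ π, ∑ k, maxTardiness cl π k ≤ L
  constructor
  · rintro ⟨a, ha⟩
    refine ⟨scheduleOf a, ?_⟩
    rwa [(isPaired_scheduleOf a).sum_maxTardiness, assignmentOf_scheduleOf]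
  · rintro ⟨π, hπ⟩
    have hpaired := isPaired_of_sum_maxTardiness_lt cl (hπ.trans_lt hL)
    exact ⟨assignmentOf π, hpaired.sum_maxTardiness cl ▸ hπ⟩

/-- reduction correctness in Theorem 1(i).
A formula with n variables and m clauses is encoded by `cl : Fin m → Fin n → Option Bool`:
`cl k i = some true` iff the literal x_i occurs in clause C_k, `cl k i = some false` iff
the literal x̄_i occurs in C_k, and `cl k i = none` otherwise (so variables within a
clause are automatically pairwise distinct); each clause has at most 3 literals.
Jobs are pairs `(i, b) : Fin n × Bool`, where `(i, true)` is J_{x_i} and `(i, false)` is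
J_{x̄_i}; a schedule is a bijection `π` from jobs to positions `Fin (2n)`, and the
completion time of job j is `(π j) + 1 ∈ {1,…,2n}` (all processing times are 1).
The due date of job `(i,b)` under scenario S_k is `2i+1` (i.e. 2(i+1)−1, 1-based) if the
corresponding literal occurs in C_k and `2i+2` (i.e. 2(i+1), 1-based) otherwise, matching
the construction in the paper.  `f(π,S_k)` is the maximum tardiness under S_k (natural
subtraction realizes [·]^+).  Claim: some assignment satisfies at most L clauses iff some
schedule π has Σ_k f(π,S_k) ≤ L. -/
theorem min3sat_reduction (n m : ℕ) (hn : 0 < n) (hm : 0 < m)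
    (cl : Fin m → Fin n → Option Bool)
    (hcl : ∀ k : Fin m,
      (Finset.univ.filter (fun i : Fin n => cl k i ≠ none)).card ≤ 3)
    (L : ℕ) (hL : L < m) :
    (∃ a : Fin n → Bool,
        (Finset.univ.filter
          (fun k : Fin m => ∃ i : Fin n, ∃ b : Bool, cl k i = some b ∧ a i = b)).card
          ≤ L)
      ↔
    (∃ π : (Fin n × Bool) ≃ Fin (2 * n),
        (∑ k : Fin m,
          Finset.univ.sup (fun j : Fin n × Bool =>
            ((π j : ℕ) + 1) -
              (if cl k j.1 = some j.2 then 2 * (j.1 : ℕ) + 1 else 2 * (j.1 : ℕ) + 2)))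
          ≤ L) :=
  min3sat_reduction_general n m cl L hL
end

section
/- (Reduction correctness in the proof of Theorem 10) Let φ be a Boolean formula with variables x_1,…,x_n and clauses C_1,…,C_m, each clause being a disjunction of at most 2 literals over pairwise distinct variables, and let L be an integer with 0 ≤ L < m. Construct 2n jobs J_{x_1}, J_{x̄_1}, …, J_{x_n}, J_{x̄_n} and m scenarios S_1,…,S_m, where under S_k (corresponding to clause C_k): for each literal of C_k, if the literal is x_i then p(J_{x_i},S_k) = 0, w(J_{x_i},S_k) = 1, p(J_{x̄_i},S_k) = 1, w(J_{x̄_i},S_k) = 0; if the literal is x̄_i then p(J_{x̄_i},S_k) = 0, w(J_{x̄_i},S_k) = 1, p(J_{x_i},S_k) = 1, w(J_{x_i},S_k) = 0; and for every variable x_i occurring in no literal of C_k, both processing times and both weights of J_{x_i} and J_{x̄_i} under S_k are 0. A schedule π is a permutation of the 2n jobs; under scenario S_k the completion time C_j(π,S_k) of job j is the sum of the processing times under S_k of j and of all jobs preceding j in π, and the cost is f(π,S_k) = Σ_j w_j(S_k) C_j(π,S_k). Then there exists a truth assignment to x_1,…,x_n satisfying at most L of the clauses if and only if there exists a schedule π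 such that f(π,S_k) = 0 for at least m − L indices k ∈ {1,…,m}. -/
/-!
Under scenario `S_k` the cost vanishes iff every job of positive weight precedes every job of
positive processing time, i.e. iff each literal of `C_k` is scheduled before the complement of
each literal of `C_k`. Hence an assignment yields a schedule of cost zero on every clause it
falsifies (put its false literals first), and a schedule yields an assignment falsifying every
clause of cost zero (make the later scheduled literal of each variable true). The two counts
then follow by passing to complements.
-/

open Finset

namespace Min2SatReduction

variable {ι β : Type*} [LinearOrder β]

/-- A clause over the variables `ι` is `c : ι → Option Bool`, where `c i = some b` means that the
literal `x_i = b` occurs in it; the job `(i, b)` belongs to that literal. -/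
def Satisfies (a : ι → Bool) (c : ι → Option Bool) : Prop :=
  ∃ i b, c i = some b ∧ a i = b

def laterLiteral (π : ι × Bool → β) (i : ι) : Bool :=
  decide (π (i, false) < π (i, true))

variable [Fintype ι]

def scenarioCost (c : ι → Option Bool) (π : ι × Bool → β) : ℕ :=
  ∑ j : ι × Bool, (if c j.1 = some j.2 then 1 else 0) *
    ∑ j' ∈ univ.filter (fun j' => π j' ≤ π j), if c j'.1 = some (!j'.2) then 1 else 0

theorem scenarioCost_eq_zero_iff {c : ι → Option Bool} {π : ι × Bool → β} :
    scenarioCost c π = 0 ↔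
      ∀ i b i' b', c i = some b → c i' = some (!b') → π (i, b) < π (i', b') := by
  simp only [scenarioCost, sum_eq_zero_iff, mem_univ, forall_const, mul_eq_zero,
    ite_eq_right_iff, one_ne_zero, imp_false, mem_filter, true_and, Prod.forall, ← not_lt]
  grind

theorem not_satisfies_laterLiteral {c : ι → Option Bool} {π : ι × Bool → β}
    (h : scenarioCost c π = 0) : ¬ Satisfies (laterLiteral π) c := by
  rintro ⟨i, b, hc, hb⟩
  have hlt := scenarioCost_eq_zero_iff.mp h i b i (!b) hc (by rwa [Bool.not_not])
  cases b <;> simp only [laterLiteral, Bool.not_false, Bool.not_true, decide_eq_true_eq,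
    decide_eq_false_iff_not, not_lt] at hb hlt <;> order

theorem scenarioCost_eq_zero_of_not_satisfies {a : ι → Bool} {c : ι → Option Bool}
    {π : ι × Bool → β} (hπ : ∀ i b i' b', a i ≠ b → a i' = b' → π (i, b) < π (i', b'))
    (h : ¬ Satisfies a c) : scenarioCost c π = 0 := by
  refine scenarioCost_eq_zero_iff.mpr fun i b i' b' hb hb' => hπ i b i' b' ?_ ?_
  · exact fun hab => h ⟨i, b, hb, hab⟩
  · simpa using fun hab => h ⟨i', !b', hb', hab⟩

variable {n : ℕ}

def falseFirst (a : Fin n → Bool) : Fin n × Bool ≃ Fin (2 * n) :=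
  (Equiv.prodCongrRight fun i => Function.Involutive.toPerm _ (Bool.beq_self_left (a i))).trans
    ((Equiv.prodComm _ _).trans
      ((Equiv.prodCongrLeft fun _ => finTwoEquiv.symm).trans finProdFinEquiv))

theorem falseFirst_apply_val (a : Fin n → Bool) (i : Fin n) (b : Bool) :
    (falseFirst a (i, b) : ℕ) = i + n * (if a i = b then 1 else 0) := by
  change (i : ℕ) + n * (finTwoEquiv.symm (a i == b) : ℕ) = _
  cases a i <;> cases b <;> rfl

theorem falseFirst_lt (a : Fin n → Bool) {i i' : Fin n} {b b' : Bool} (hb : a i ≠ b)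
    (hb' : a i' = b') : falseFirst a (i, b) < falseFirst a (i', b') := by
  rw [Fin.lt_def, falseFirst_apply_val, falseFirst_apply_val, if_neg hb, if_pos hb']
  omega

end Min2SatReduction

namespace Finset

variable {α : Type*} [Fintype α] {p q : α → Prop} [DecidablePred p] [DecidablePred q] {L : ℕ}

theorem card_sub_le_card_filter (hp : #(univ.filter p) ≤ L) (h : ∀ x, ¬ p x → q x) :
    Fintype.card α - L ≤ #(univ.filter q) := by
  have hcompl : #(univ.filter fun x => ¬ p x) ≤ #(univ.filter q) :=
    card_le_card (monotone_filter_right _ fun x _ => h x)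
  have hsplit := card_filter_add_card_filter_not (s := univ) p
  rw [card_univ] at hsplit
  omega

theorem card_filter_le_of_card_sub_le (hq : Fintype.card α - L ≤ #(univ.filter q))
    (h : ∀ x, q x → ¬ p x) : #(univ.filter p) ≤ L := by
  have hcompl : #(univ.filter q) ≤ #(univ.filter fun x => ¬ p x) :=
    card_le_card (monotone_filter_right _ fun x _ => h x)
  have hsplit := card_filter_add_card_filter_not (s := univ) p
  rw [card_univ] at hsplit
  omega

end Finset

open Min2SatReduction

theorem min2sat_reduction_general (n m : ℕ)
    (cl : Fin m → Fin n → Option Bool)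
    (L : ℕ) :
    (∃ a : Fin n → Bool,
        (Finset.univ.filter
          (fun k : Fin m => ∃ i : Fin n, ∃ b : Bool, cl k i = some b ∧ a i = b)).card
          ≤ L)
      ↔
    (∃ π : (Fin n × Bool) ≃ Fin (2 * n),
        m - L ≤
          (Finset.univ.filter (fun k : Fin m =>
            (∑ j : Fin n × Bool,
              (if cl k j.1 = some j.2 then 1 else 0) *
                (∑ j' ∈ Finset.univ.filter
                    (fun j' : Fin n × Bool => π j' ≤ π j),
                  (if cl k j'.1 = some (!j'.2) then 1 else 0))) = (0 : ℕ))).card) := by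
  constructor
  · rintro ⟨a, ha⟩
    exact ⟨falseFirst a, (Nat.sub_le_sub_right (Fintype.card_fin m).ge L).trans
      (card_sub_le_card_filter ha fun _ =>
        scenarioCost_eq_zero_of_not_satisfies fun _ _ _ _ => falseFirst_lt a)⟩
  · rintro ⟨π, hπ⟩
    exact ⟨laterLiteral π, card_filter_le_of_card_sub_le (by rwa [Fintype.card_fin])
      fun _ => not_satisfies_laterLiteral⟩

/-- reduction correctness in the proof of Theorem 10.
A formula with n variables and m clauses (each a disjunction of at most 2 literals over
pairwise distinct variables) is encoded by `cl : Fin m → Fin n → Option Bool`: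
`cl k i = some true` iff x_i occurs in C_k, `cl k i = some false` iff x̄_i occurs in C_k,
and `cl k i = none` otherwise.  Jobs are pairs `(i, b) : Fin n × Bool` ((i,true) = J_{x_i},
(i,false) = J_{x̄_i}); under scenario S_k, job `(i,b)` has processing time 1 if the
opposite literal (i, ¬b) occurs in C_k and 0 otherwise, and weight 1 if literal (i,b)
occurs in C_k and 0 otherwise — exactly the construction of the paper.  A schedule is a
bijection `π` from jobs to positions `Fin (2n)`; the completion time of job j under S_k
is the sum of processing times of j and of all jobs preceding it, and
`f(π,S_k) = Σ_j w_j(S_k)·C_j(π,S_k)`.  Claim: some assignment satisfies at most L clauses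
iff some schedule π has cost 0 under at least m − L scenarios. -/
theorem min2sat_reduction (n m : ℕ) (hn : 0 < n) (hm : 0 < m)
    (cl : Fin m → Fin n → Option Bool)
    (hcl : ∀ k : Fin m,
      (Finset.univ.filter (fun i : Fin n => cl k i ≠ none)).card ≤ 2)
    (L : ℕ) (hL : L < m) :
    (∃ a : Fin n → Bool,
        (Finset.univ.filter
          (fun k : Fin m => ∃ i : Fin n, ∃ b : Bool, cl k i = some b ∧ a i = b)).card
          ≤ L)
      ↔
    (∃ π : (Fin n × Bool) ≃ Fin (2 * n),
        m - L ≤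
          (Finset.univ.filter (fun k : Fin m =>
            (∑ j : Fin n × Bool,
              (if cl k j.1 = some j.2 then 1 else 0) *
                (∑ j' ∈ Finset.univ.filter
                    (fun j' : Fin n × Bool => π j' ≤ π j),
                  (if cl k j'.1 = some (!j'.2) then 1 else 0))) = (0 : ℕ))).card) :=
  min2sat_reduction_general n m cl L
end
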